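/- arXiv:1907.10042 — 9 statements merged into one kernel-verified Lean document; each statement's English description precedes it below -/
import Mathlib

section
/- Let (A,*) be a unital complete normed algebra with unit e, let |*| denote the operator norm of the bilinear map *. Let a ∈ A be invertible, let r be a constant with 0 ≤ r < 1, and let b ∈ A satisfy ‖b − a‖ ≤ r·(‖a⁻¹‖·|*|²)⁻¹. Then b is invertible and ‖b⁻¹ − a⁻¹‖ ≤ (‖e‖·|*| + r·(1−r)⁻¹)·|*|²·‖a⁻¹‖²·‖b − a‖. -/
set_option maxHeartbeats 1000000


/-- Let `(A, mul)` be a unital complete normed algebra with unit `e`.  If `a`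
is invertible, `0 ≤ r < 1` and `‖b - a‖ ≤ r * (‖a⁻¹‖ * ‖mul‖^2)⁻¹`, then `b` is invertible
and `‖b⁻¹ - a⁻¹‖ ≤ (‖e‖ * ‖mul‖ + r * (1 - r)⁻¹) * ‖mul‖^2 * ‖a⁻¹‖^2 * ‖b - a‖`. -/
theorem stmt_1
    {A : Type*} [NormedAddCommGroup A] [NormedSpace ℝ A] [CompleteSpace A]
    (mul : A →L[ℝ] A →L[ℝ] A)
    (hassoc : ∀ x y z : A, mul (mul x y) z = mul x (mul y z))
    (e : A) (he : ∀ x : A, mul e x = x ∧ mul x e = x)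
    (a ainv : A) (ha₁ : mul a ainv = e) (ha₂ : mul ainv a = e)
    (r : ℝ) (hr0 : 0 ≤ r) (hr1 : r < 1)
    (b : A) (hb : ‖b - a‖ ≤ r * (‖ainv‖ * ‖mul‖ ^ 2)⁻¹) :
    ∃ binv : A, mul b binv = e ∧ mul binv b = e ∧
      ‖binv - ainv‖ ≤ (‖e‖ * ‖mul‖ + r * (1 - r)⁻¹) * ‖mul‖ ^ 2 * ‖ainv‖ ^ 2 * ‖b - a‖ := by
  by_cases he0 : e = 0
  · -- degenerate case: everything is zero
    have hz : ∀ x : A, x = 0 := fun x => by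
      have h := (he x).2
      rw [he0] at h
      simpa using h.symm
    refine ⟨0, ?_, ?_, ?_⟩
    · rw [he0]; simp
    · rw [he0]; simp
    · rw [hz ainv]
      have : (0:ℝ) ≤ (‖e‖ * ‖mul‖ + r * (1 - r)⁻¹) * ‖mul‖ ^ 2 * ‖(0:A)‖ ^ 2 * ‖b - a‖ := by
        simp
      simpa using this
  · have hepos : 0 < ‖e‖ := norm_pos_iff.mpr he0
    have hme : 1 ≤ ‖mul‖ * ‖e‖ := by
      have h1 : ‖e‖ ≤ ‖mul‖ * ‖e‖ * ‖e‖ := by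
        calc ‖e‖ = ‖mul e e‖ := by rw [(he e).1]
          _ ≤ ‖mul e‖ * ‖e‖ := (mul e).le_opNorm e
          _ ≤ ‖mul‖ * ‖e‖ * ‖e‖ := by
              have := mul.le_opNorm e
              nlinarith [norm_nonneg e]
      nlinarith
    have hmpos : 0 < ‖mul‖ := by nlinarith [norm_nonneg e, norm_nonneg mul]
    have hainv0 : ainv ≠ 0 := by
      intro h
      apply he0
      rw [← ha₂, h]
      simp
    have hapos : 0 < ‖ainv‖ := norm_pos_iff.mpr hainv0
    -- key quantitative bound
    have key : ‖mul‖ ^ 2 * ‖ainv‖ * ‖b - a‖ ≤ r := by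
      have hpos : 0 < ‖ainv‖ * ‖mul‖ ^ 2 := by positivity
      have hb' : ‖b - a‖ ≤ r / (‖ainv‖ * ‖mul‖ ^ 2) := by
        rw [div_eq_mul_inv]; exact hb
      rw [le_div_iff₀ hpos] at hb'
      nlinarith
    -- composition fact
    have hcomp : ∀ x y : A, mul (mul x y) = mul x * mul y := by
      intro x y
      ext z
      rw [ContinuousLinearMap.mul_apply]
      exact hassoc x y z
    -- left perturbation d and unit w
    set d : A := mul ainv (b - a) with hd_def
    have hd : ‖d‖ ≤ ‖mul‖ * ‖ainv‖ * ‖b - a‖ := by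
      calc ‖mul ainv (b - a)‖ ≤ ‖mul ainv‖ * ‖b - a‖ := (mul ainv).le_opNorm _
        _ ≤ ‖mul‖ * ‖ainv‖ * ‖b - a‖ := by
            have := mul.le_opNorm ainv
            nlinarith [norm_nonneg (b - a)]
    have hDnorm : ‖mul d‖ < 1 := by
      have h1 : ‖mul d‖ ≤ ‖mul‖ * ‖d‖ := mul.le_opNorm d
      have h2 : ‖mul‖ * ‖d‖ ≤ ‖mul‖ ^ 2 * ‖ainv‖ * ‖b - a‖ := by nlinarith
      linarith
    have hDnorm' : ‖-(mul d)‖ < 1 := by rwa [norm_neg]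
    set w : (A →L[ℝ] A)ˣ := Units.oneSub (-(mul d)) hDnorm' with hw_def
    have hwval : (w : A →L[ℝ] A) = 1 + mul d := by
      rw [hw_def, Units.val_oneSub, sub_neg_eq_add]
    -- mul b factors as (mul a) * w
    have hfac : mul a * (w : A →L[ℝ] A) = mul b := by
      rw [hwval, mul_add, mul_one, ← hcomp]
      have had : mul a d = b - a := by
        rw [hd_def, ← hassoc, ha₁, (he (b - a)).1]
      rw [had]
      rw [← map_add]
      congr 1
      abel
    set binv : A := (↑w⁻¹ : A →L[ℝ] A) ainv with hbinv_def
    have hwbinv : (w : A →L[ℝ] A) binv = ainv := by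
      rw [hbinv_def, ← ContinuousLinearMap.mul_apply, w.mul_inv,
        ContinuousLinearMap.one_apply]
    have hright : mul b binv = e := by
      rw [← hfac, ContinuousLinearMap.mul_apply, hwbinv, ha₁]
    -- right perturbation d' and unit w' for the left inverse
    set d' : A := mul (b - a) ainv with hd'_def
    have hd' : ‖d'‖ ≤ ‖mul‖ * ‖ainv‖ * ‖b - a‖ := by
      calc ‖mul (b - a) ainv‖ ≤ ‖mul (b - a)‖ * ‖ainv‖ := (mul (b - a)).le_opNorm _
        _ ≤ ‖mul‖ * ‖ainv‖ * ‖b - a‖ := by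
            have := mul.le_opNorm (b - a)
            nlinarith [norm_nonneg ainv, norm_nonneg (b-a)]
    have hD'norm : ‖mul.flip d'‖ < 1 := by
      have h1 : ‖mul.flip d'‖ ≤ ‖mul.flip‖ * ‖d'‖ := mul.flip.le_opNorm d'
      rw [ContinuousLinearMap.opNorm_flip] at h1
      have h2 : ‖mul‖ * ‖d'‖ ≤ ‖mul‖ ^ 2 * ‖ainv‖ * ‖b - a‖ := by nlinarith
      linarith
    have hD'norm' : ‖-(mul.flip d')‖ < 1 := by rwa [norm_neg]
    set w' : (A →L[ℝ] A)ˣ := Units.oneSub (-(mul.flip d')) hD'norm' with hw'_def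
    have hw'val : (w' : A →L[ℝ] A) = 1 + mul.flip d' := by
      rw [hw'_def, Units.val_oneSub, sub_neg_eq_add]
    have hcomp' : ∀ x y : A, mul.flip (mul x y) = mul.flip y * mul.flip x := by
      intro x y
      ext z
      rw [ContinuousLinearMap.mul_apply, ContinuousLinearMap.flip_apply,
        ContinuousLinearMap.flip_apply, ContinuousLinearMap.flip_apply]
      exact (hassoc z x y).symm
    have hda : mul d' a = b - a := by
      rw [hd'_def, hassoc, ha₂, (he (b - a)).2]
    have hfac' : mul.flip a * (w' : A →L[ℝ] A) = mul.flip b := by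
      rw [hw'val, mul_add, mul_one, ← hcomp' d' a, hda, ← map_add]
      congr 1
      abel
    set binv' : A := (↑w'⁻¹ : A →L[ℝ] A) ainv with hbinv'_def
    have hw'binv' : (w' : A →L[ℝ] A) binv' = ainv := by
      rw [hbinv'_def, ← ContinuousLinearMap.mul_apply, w'.mul_inv,
        ContinuousLinearMap.one_apply]
    have hleft' : mul binv' b = e := by
      have : mul.flip b binv' = e := by
        rw [← hfac', ContinuousLinearMap.mul_apply, hw'binv',
          ContinuousLinearMap.flip_apply, ha₂]
      rwa [ContinuousLinearMap.flip_apply] at this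
    have hbb : binv' = binv := by
      calc binv' = mul binv' e := ((he binv').2).symm
        _ = mul binv' (mul b binv) := by rw [hright]
        _ = mul (mul binv' b) binv := (hassoc _ _ _).symm
        _ = mul e binv := by rw [hleft']
        _ = binv := (he binv).1
    have hleft : mul binv b = e := by rw [← hbb]; exact hleft'
    -- norm estimate
    have h1 : binv + mul d binv = ainv := by
      have h := hwbinv
      rw [hwval] at h
      simpa using h
    have heq : binv - ainv = -(mul d binv) := by
      rw [← h1]; abel
    have hbe : binv = ainv - mul d binv := by rw [← h1]; abel
    have hdb : ‖mul d binv‖ ≤ ‖mul‖ ^ 2 * ‖ainv‖ * ‖b - a‖ * ‖binv‖ := by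
      calc ‖mul d binv‖ ≤ ‖mul d‖ * ‖binv‖ := (mul d).le_opNorm binv
        _ ≤ (‖mul‖ * ‖d‖) * ‖binv‖ := by
            have := mul.le_opNorm d
            nlinarith [norm_nonneg binv]
        _ ≤ ‖mul‖ ^ 2 * ‖ainv‖ * ‖b - a‖ * ‖binv‖ := by
            have h3 := mul_le_mul_of_nonneg_left hd hmpos.le
            have h4 := mul_le_mul_of_nonneg_right h3 (norm_nonneg binv)
            nlinarith [h4]
    have hdbr : ‖mul d binv‖ ≤ r * ‖binv‖ := by
      nlinarith [norm_nonneg binv]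
    have hbinvn : ‖binv‖ ≤ ‖ainv‖ * (1 - r)⁻¹ := by
      have h1r : (0:ℝ) < 1 - r := by linarith
      have hub : ‖binv‖ ≤ ‖ainv‖ + r * ‖binv‖ := by
        calc ‖binv‖ = ‖ainv - mul d binv‖ := by rw [← hbe]
          _ ≤ ‖ainv‖ + ‖mul d binv‖ := norm_sub_le _ _
          _ ≤ ‖ainv‖ + r * ‖binv‖ := by linarith
      have hinv : (1 - r)⁻¹ * (1 - r) = 1 := inv_mul_cancel₀ h1r.ne'
      nlinarith [norm_nonneg binv]
    have hcoef : (1 - r)⁻¹ ≤ ‖e‖ * ‖mul‖ + r * (1 - r)⁻¹ := by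
      have h1r : (0:ℝ) < 1 - r := by linarith
      have hinv : (1 - r)⁻¹ * (1 - r) = 1 := inv_mul_cancel₀ h1r.ne'
      nlinarith [hme]
    refine ⟨binv, hright, hleft, ?_⟩
    have hfin := mul_le_mul_of_nonneg_right hcoef
      (show (0:ℝ) ≤ ‖mul‖ ^ 2 * ‖ainv‖ ^ 2 * ‖b - a‖ from by positivity)
    calc ‖binv - ainv‖ = ‖mul d binv‖ := by rw [heq, norm_neg]
      _ ≤ ‖mul‖ ^ 2 * ‖ainv‖ * ‖b - a‖ * ‖binv‖ := hdb
      _ ≤ ‖mul‖ ^ 2 * ‖ainv‖ * ‖b - a‖ * (‖ainv‖ * (1 - r)⁻¹) := by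
          have hK : (0:ℝ) ≤ ‖mul‖ ^ 2 * ‖ainv‖ * ‖b - a‖ := by positivity
          exact mul_le_mul_of_nonneg_left hbinvn hK
      _ ≤ (‖e‖ * ‖mul‖ + r * (1 - r)⁻¹) * ‖mul‖ ^ 2 * ‖ainv‖ ^ 2 * ‖b - a‖ := by
          nlinarith [hfin]
end

section
/- Let E be a nonzero Banach space and let *, ⋄ be continuous multiplications on E. Suppose * is unital with unit e_* and that |⋄ − *| ≤ r·‖e_*‖⁻¹ for some constant r with 0 ≤ r < 1, where |·| denotes the operator norm on bounded bilinear operators. Then ⋄ is also unital. -/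
/-- Let `E` be a nonzero Banach space, `f, g` continuous multiplications on
`E` with `f` unital with unit `e`.  If `‖g - f‖ ≤ r * ‖e‖⁻¹` for some `0 ≤ r < 1`, then `g`
is unital as well. -/
theorem stmt_2
    {E : Type*} [NormedAddCommGroup E] [NormedSpace ℝ E] [CompleteSpace E] [Nontrivial E]
    (f g : E →L[ℝ] E →L[ℝ] E)
    (hf : ∀ x y z : E, f (f x y) z = f x (f y z))
    (hg : ∀ x y z : E, g (g x y) z = g x (g y z))
    (e : E) (he : ∀ x : E, f e x = x ∧ f x e = x)
    (r : ℝ) (hr0 : 0 ≤ r) (hr1 : r < 1)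
    (hd : ‖g - f‖ ≤ r * ‖e‖⁻¹) :
    ∃ e' : E, ∀ x : E, g e' x = x ∧ g x e' = x := by
  -- e ≠ 0
  have he0 : e ≠ 0 := by
    intro h
    obtain ⟨x, y, hxy⟩ := exists_pair_ne E
    apply hxy
    have hx := (he x).1
    have hy := (he y).1
    rw [h] at hx hy
    simp only [map_zero, ContinuousLinearMap.zero_apply] at hx hy
    rw [← hx, ← hy]
  have hne : ‖e‖⁻¹ * ‖e‖ = 1 := inv_mul_cancel₀ (norm_ne_zero_iff.mpr he0)
  -- bound on the difference
  have hgf : ∀ x y : E, ‖g x y - f x y‖ ≤ r * ‖e‖⁻¹ * (‖x‖ * ‖y‖) := by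
    intro x y
    have h1 : ‖(g - f) x y‖ ≤ ‖g - f‖ * ‖x‖ * ‖y‖ := ContinuousLinearMap.le_opNorm₂ _ x y
    have h2 : ‖g - f‖ * ‖x‖ * ‖y‖ ≤ r * ‖e‖⁻¹ * (‖x‖ * ‖y‖) := by
      rw [mul_assoc]
      exact mul_le_mul_of_nonneg_right hd (by positivity)
    simpa [ContinuousLinearMap.sub_apply] using h1.trans h2
  -- a general invertibility criterion
  have key : ∀ C : E →L[ℝ] E, (∀ x, ‖C x - x‖ ≤ r * ‖x‖) → IsUnit C := by
    intro C hC
    have h1 : ‖1 - C‖ ≤ r := by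
      apply ContinuousLinearMap.opNorm_le_bound _ hr0
      intro x
      simpa [norm_sub_rev] using hC x
    have := (Units.oneSub (1 - C) (lt_of_le_of_lt h1 hr1)).isUnit
    simpa using this
  -- left multiplication by e
  set A : E →L[ℝ] E := g e with hA
  set B : E →L[ℝ] E := g.flip e with hB
  have hAunit : IsUnit A := by
    apply key
    intro x
    have := hgf e x
    rw [(he x).1] at this
    calc ‖A x - x‖ = ‖g e x - x‖ := rfl
      _ ≤ r * ‖e‖⁻¹ * (‖e‖ * ‖x‖) := this
      _ = r * (‖e‖⁻¹ * ‖e‖) * ‖x‖ := by ring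
      _ = r * ‖x‖ := by rw [hne, mul_one]
  have hBunit : IsUnit B := by
    apply key
    intro x
    have := hgf x e
    rw [(he x).2] at this
    calc ‖B x - x‖ = ‖g x e - x‖ := rfl
      _ ≤ r * ‖e‖⁻¹ * (‖x‖ * ‖e‖) := this
      _ = r * (‖e‖⁻¹ * ‖e‖) * ‖x‖ := by ring
      _ = r * ‖x‖ := by rw [hne, mul_one]
  obtain ⟨u, hu⟩ := hAunit
  obtain ⟨v, hv⟩ := hBunit
  -- e' : left unit candidate
  set e' : E := (↑u⁻¹ : E →L[ℝ] E) e with he'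
  set e'' : E := (↑v⁻¹ : E →L[ℝ] E) e with he''
  have hAinj : Function.Injective A := by
    intro a b hab
    have : (↑u⁻¹ : E →L[ℝ] E) (A a) = (↑u⁻¹ : E →L[ℝ] E) (A b) := by rw [hab]
    have ha : ∀ x : E, (↑u⁻¹ : E →L[ℝ] E) (A x) = x := by
      intro x
      rw [← hu, ← ContinuousLinearMap.mul_apply, u.inv_mul, ContinuousLinearMap.one_apply]
    rwa [ha a, ha b] at this
  have hBinj : Function.Injective B := by
    intro a b hab
    have : (↑v⁻¹ : E →L[ℝ] E) (B a) = (↑v⁻¹ : E →L[ℝ] E) (B b) := by rw [hab]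
    have ha : ∀ x : E, (↑v⁻¹ : E →L[ℝ] E) (B x) = x := by
      intro x
      rw [← hv, ← ContinuousLinearMap.mul_apply, v.inv_mul, ContinuousLinearMap.one_apply]
    rwa [ha a, ha b] at this
  have hAe' : A e' = e := by
    show A ((↑u⁻¹ : E →L[ℝ] E) e) = e
    rw [← hu, ← ContinuousLinearMap.mul_apply, u.mul_inv, ContinuousLinearMap.one_apply]
  have hBe'' : B e'' = e := by
    show B ((↑v⁻¹ : E →L[ℝ] E) e) = e
    rw [← hv, ← ContinuousLinearMap.mul_apply, v.mul_inv, ContinuousLinearMap.one_apply]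
  -- e' is a left unit
  have hleft : ∀ x : E, g e' x = x := by
    intro x
    apply hAinj
    show g e (g e' x) = g e x
    rw [← hg e e' x]
    have : g e e' = e := hAe'
    rw [this]
  have hright : ∀ x : E, g x e'' = x := by
    intro x
    apply hBinj
    show g (g x e'') e = g x e
    rw [hg x e'' e]
    have : g e'' e = e := hBe''
    rw [this]
  have heq : e' = e'' := by
    have h1 := hleft e''
    have h2 := hright e'
    rw [h2] at h1
    exact h1
  exact ⟨e', fun x => ⟨hleft x, heq ▸ hright x⟩⟩
end

section
/- Let E be a nonzero Banach space and let *, ⋄ be continuous multiplications on E. Suppose * is unital with unit e_* and that |⋄ − *| ≤ r·‖e_*‖⁻¹ for some constant r with 0 ≤ r < 1. Then ⋄ is unital with unit e_⋄, and with s = 1 + r·(1−r)⁻¹ one has ‖e_⋄ − e_*‖ ≤ s·|⋄ − *|·‖e_*‖² ≤ r·s·‖e_*‖. -/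
/-! Since `e` is a unit for `f`, the left and right multiplications by `e` for `g` lie within
`‖g - f‖ * ‖e‖ ≤ r < 1` of the identity, so they are invertible (Neumann series). In a semigroup,
an element whose left and right multiplications are bijective forces a two-sided unit: solve
`e * u = e` and `v * e = e` and cancel `e`. The unit `e'` of `g` satisfies `g e e' = e`, so
`e' - e = (1 - g e) e'`, and `‖e'‖ ≤ (1 - r)⁻¹ * ‖e‖` because `g e` is close to the identity. -/

open ContinuousLinearMap

theorem exists_unit_of_bijective_mul {M : Type*} (mul : M → M → M)
    (hmul : ∀ x y z, mul (mul x y) z = mul x (mul y z)) (a : M)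
    (hl : Function.Bijective (mul a)) (hr : Function.Bijective (fun x => mul x a)) :
    ∃ u, ∀ x, mul u x = x ∧ mul x u = x := by
  obtain ⟨l, hla⟩ := hl.2 a
  obtain ⟨r, hra⟩ := hr.2 a
  have hleft : ∀ x, mul l x = x := fun x => hl.1 (by rw [← hmul, hla])
  have hright : ∀ x, mul x r = x := fun x => hr.1 (by simp only [hmul, hra])
  have hlr : l = r := (hright l).symm.trans (hleft r)
  exact ⟨l, fun x => ⟨hleft x, hlr ▸ hright x⟩⟩

section NormedSpace

variable {𝕜 E : Type*} [NontriviallyNormedField 𝕜] [NormedAddCommGroup E] [NormedSpace 𝕜 E]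

theorem bijective_of_norm_one_sub_lt_one [CompleteSpace E] {T : E →L[𝕜] E} (hT : ‖1 - T‖ < 1) :
    Function.Bijective T :=
  isUnit_iff_bijective.mp (by simpa using isUnit_one_sub_of_norm_lt_one hT)

theorem norm_le_inv_one_sub_mul_norm_apply {T : E →L[𝕜] E} {δ : ℝ} (hT : ‖1 - T‖ ≤ δ)
    (hδ : δ < 1) (y : E) : ‖y‖ ≤ (1 - δ)⁻¹ * ‖T y‖ := by
  have hy : ‖y‖ ≤ ‖T y‖ + δ * ‖y‖ :=
    calc ‖y‖ = ‖T y + (1 - T) y‖ := by simp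
      _ ≤ ‖T y‖ + ‖1 - T‖ * ‖y‖ := norm_add_le_of_le le_rfl ((1 - T).le_opNorm y)
      _ ≤ ‖T y‖ + δ * ‖y‖ := by gcongr
  rw [inv_mul_eq_div, le_div_iff₀ (by linarith)]
  linarith

theorem norm_one_sub_apply_le {F : Type*} [NormedAddCommGroup F] [NormedSpace 𝕜 F]
    (f g : E →L[𝕜] F →L[𝕜] F) (e : E) (hfe : f e = 1) : ‖1 - g e‖ ≤ ‖g - f‖ * ‖e‖ := by
  rw [← hfe, ← sub_apply, ← neg_sub g f, neg_apply, norm_neg]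
  exact (g - f).le_opNorm e

theorem exists_unit_of_norm_sub_mul_norm_le [CompleteSpace E] (f g : E →L[𝕜] E →L[𝕜] E)
    (hg : ∀ x y z : E, g (g x y) z = g x (g y z))
    (e : E) (he : ∀ x : E, f e x = x ∧ f x e = x)
    {r : ℝ} (hr1 : r < 1) (hgf : ‖g - f‖ * ‖e‖ ≤ r) :
    ∃ e' : E, (∀ x : E, g e' x = x ∧ g x e' = x) ∧
      ‖e' - e‖ ≤ (1 - r)⁻¹ * ‖g - f‖ * ‖e‖ ^ 2 := by
  have hleft : ‖1 - g e‖ ≤ ‖g - f‖ * ‖e‖ :=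
    norm_one_sub_apply_le f g e (ext fun x => (he x).1)
  have hright : ‖1 - g.flip e‖ ≤ ‖g - f‖ * ‖e‖ := by
    have := norm_one_sub_apply_le f.flip g.flip e (ext fun x => (he x).2)
    have hflip : g.flip - f.flip = (g - f).flip := by ext; rfl
    rwa [hflip, opNorm_flip] at this
  obtain ⟨e', he'⟩ := exists_unit_of_bijective_mul (fun x y => g x y) hg e
    (bijective_of_norm_one_sub_lt_one (hleft.trans_lt (hgf.trans_lt hr1)))
    (by exact bijective_of_norm_one_sub_lt_one (hright.trans_lt (hgf.trans_lt hr1)))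
  have hnorm : ‖e'‖ ≤ (1 - r)⁻¹ * ‖e‖ := by
    simpa only [(he' e).2] using norm_le_inv_one_sub_mul_norm_apply (hleft.trans hgf) hr1 e'
  refine ⟨e', he', ?_⟩
  calc ‖e' - e‖ = ‖(1 - g e) e'‖ := by rw [sub_apply, one_apply_eq_self, (he' e).2]
    _ ≤ ‖1 - g e‖ * ‖e'‖ := (1 - g e).le_opNorm e'
    _ ≤ (‖g - f‖ * ‖e‖) * ((1 - r)⁻¹ * ‖e‖) := by gcongr
    _ = (1 - r)⁻¹ * ‖g - f‖ * ‖e‖ ^ 2 := by ring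

end NormedSpace

theorem stmt_3_general
    {E : Type*} [NormedAddCommGroup E] [NormedSpace ℝ E] [CompleteSpace E]
    (f g : E →L[ℝ] E →L[ℝ] E)
    (hg : ∀ x y z : E, g (g x y) z = g x (g y z))
    (e : E) (he : ∀ x : E, f e x = x ∧ f x e = x)
    (r : ℝ) (hr0 : 0 ≤ r) (hr1 : r < 1)
    (hd : ‖g - f‖ ≤ r * ‖e‖⁻¹) :
    ∃ e' : E, (∀ x : E, g e' x = x ∧ g x e' = x) ∧
      ‖e' - e‖ ≤ (1 + r * (1 - r)⁻¹) * ‖g - f‖ * ‖e‖ ^ 2 ∧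
      (1 + r * (1 - r)⁻¹) * ‖g - f‖ * ‖e‖ ^ 2 ≤ r * (1 + r * (1 - r)⁻¹) * ‖e‖ := by
  have hgf : ‖g - f‖ * ‖e‖ ≤ r := mul_le_of_le_mul_inv₀ hr0 (norm_nonneg e) hd
  have hs : 1 + r * (1 - r)⁻¹ = (1 - r)⁻¹ := by
    field_simp [sub_ne_zero.mpr hr1.ne']
    ring
  obtain ⟨e', he', hdist⟩ := exists_unit_of_norm_sub_mul_norm_le f g hg e he hr1 hgf
  refine ⟨e', he', by rwa [hs], ?_⟩
  have hs0 : 0 ≤ (1 - r)⁻¹ * ‖e‖ := mul_nonneg (inv_nonneg.mpr (by linarith)) (norm_nonneg e)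
  rw [hs]
  calc (1 - r)⁻¹ * ‖g - f‖ * ‖e‖ ^ 2 = (‖g - f‖ * ‖e‖) * ((1 - r)⁻¹ * ‖e‖) := by ring
    _ ≤ r * ((1 - r)⁻¹ * ‖e‖) := mul_le_mul_of_nonneg_right hgf hs0
    _ = r * (1 - r)⁻¹ * ‖e‖ := by ring

/-- Let `E` be a nonzero Banach space, `f, g` continuous multiplications on
`E` with `f` unital with unit `e`.  If `‖g - f‖ ≤ r * ‖e‖⁻¹` for some `0 ≤ r < 1`, then `g`
is unital with unit `e'`, and with `s = 1 + r * (1 - r)⁻¹` one has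
`‖e' - e‖ ≤ s * ‖g - f‖ * ‖e‖^2 ≤ r * s * ‖e‖`. -/
theorem stmt_3
    {E : Type*} [NormedAddCommGroup E] [NormedSpace ℝ E] [CompleteSpace E] [Nontrivial E]
    (f g : E →L[ℝ] E →L[ℝ] E)
    (hf : ∀ x y z : E, f (f x y) z = f x (f y z))
    (hg : ∀ x y z : E, g (g x y) z = g x (g y z))
    (e : E) (he : ∀ x : E, f e x = x ∧ f x e = x)
    (r : ℝ) (hr0 : 0 ≤ r) (hr1 : r < 1)
    (hd : ‖g - f‖ ≤ r * ‖e‖⁻¹) :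
    ∃ e' : E, (∀ x : E, g e' x = x ∧ g x e' = x) ∧
      ‖e' - e‖ ≤ (1 + r * (1 - r)⁻¹) * ‖g - f‖ * ‖e‖ ^ 2 ∧
      (1 + r * (1 - r)⁻¹) * ‖g - f‖ * ‖e‖ ^ 2 ≤ r * (1 + r * (1 - r)⁻¹) * ‖e‖ :=
  stmt_3_general f g hg e he r hr0 hr1 hd
end

section
/- Let E be a nonzero Banach space, let * be a unital continuous multiplication on E, and let a be invertible in (E,*) with inverse a⁻¹_*. Let ⋄ be a continuous multiplication on E with |⋄ − *| < (‖a‖·‖a⁻¹_*‖·|*|)⁻¹. Then ⋄ is unital and a is invertible in (E,⋄). -/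
/-- Let `E` be a nonzero Banach space, `f` a unital continuous multiplication
on `E`, `a` invertible in `(E, f)` with inverse `ainv`.  If `g` is a continuous multiplication
on `E` with `‖g - f‖ < (‖a‖ * ‖ainv‖ * ‖f‖)⁻¹`, then `g` is unital and `a` is invertible in
`(E, g)`. -/
theorem stmt_5
    {E : Type*} [NormedAddCommGroup E] [NormedSpace ℝ E] [CompleteSpace E] [Nontrivial E]
    (f g : E →L[ℝ] E →L[ℝ] E)
    (hf : ∀ x y z : E, f (f x y) z = f x (f y z))
    (hg : ∀ x y z : E, g (g x y) z = g x (g y z))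
    (e : E) (he : ∀ x : E, f e x = x ∧ f x e = x)
    (a ainv : E) (ha₁ : f a ainv = e) (ha₂ : f ainv a = e)
    (hd : ‖g - f‖ < (‖a‖ * ‖ainv‖ * ‖f‖)⁻¹) :
    ∃ e' : E, (∀ x : E, g e' x = x ∧ g x e' = x) ∧
      ∃ b : E, g a b = e' ∧ g b a = e' := by
  have hgf0 : (0:ℝ) ≤ ‖g - f‖ := ContinuousLinearMap.opNorm_nonneg _
  have ha0 : (0:ℝ) ≤ ‖a‖ := norm_nonneg a
  have hi0 : (0:ℝ) ≤ ‖ainv‖ := norm_nonneg ainv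
  have hf0 : (0:ℝ) ≤ ‖f‖ := ContinuousLinearMap.opNorm_nonneg f
  have hprodpos : 0 < ‖a‖ * ‖ainv‖ * ‖f‖ := by
    by_contra h
    push_neg at h
    have : (‖a‖ * ‖ainv‖ * ‖f‖)⁻¹ ≤ 0 := inv_nonpos.mpr h
    linarith
  have hapos : 0 < ‖a‖ := by
    by_contra h
    push_neg at h
    rw [le_antisymm h ha0] at hprodpos
    simp at hprodpos
  have hipos : 0 < ‖ainv‖ := by
    by_contra h
    push_neg at h
    rw [le_antisymm h hi0] at hprodpos
    simp at hprodpos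
  have hfpos : 0 < ‖f‖ := by
    by_contra h
    push_neg at h
    rw [le_antisymm h hf0] at hprodpos
    simp at hprodpos
  have hifpos : 0 < ‖ainv‖ * ‖f‖ := mul_pos hipos hfpos
  -- f-units as operator units
  have hA₁ : (f a) * (f ainv) = 1 := by
    ext x
    simp only [ContinuousLinearMap.mul_apply, ContinuousLinearMap.one_apply]
    rw [← hf, ha₁]; exact (he x).1
  have hA₂ : (f ainv) * (f a) = 1 := by
    ext x
    simp only [ContinuousLinearMap.mul_apply, ContinuousLinearMap.one_apply]
    rw [← hf, ha₂]; exact (he x).1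
  set A : (E →L[ℝ] E)ˣ := ⟨f a, f ainv, hA₁, hA₂⟩ with hAdef
  have hB₁ : (f.flip a) * (f.flip ainv) = 1 := by
    ext x
    simp only [ContinuousLinearMap.mul_apply, ContinuousLinearMap.one_apply,
      ContinuousLinearMap.flip_apply]
    rw [hf, ha₂]; exact (he x).2
  have hB₂ : (f.flip ainv) * (f.flip a) = 1 := by
    ext x
    simp only [ContinuousLinearMap.mul_apply, ContinuousLinearMap.one_apply,
      ContinuousLinearMap.flip_apply]
    rw [hf, ha₁]; exact (he x).2
  set B : (E →L[ℝ] E)ˣ := ⟨f.flip a, f.flip ainv, hB₁, hB₂⟩ with hBdef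
  -- common norm bound
  have hkey : ‖g - f‖ * ‖a‖ < (‖ainv‖ * ‖f‖)⁻¹ := by
    have h2 : ‖g - f‖ * ‖a‖ < (‖a‖ * ‖ainv‖ * ‖f‖)⁻¹ * ‖a‖ :=
      mul_lt_mul_of_pos_right hd hapos
    have h3 : (‖a‖ * ‖ainv‖ * ‖f‖)⁻¹ * ‖a‖ = (‖ainv‖ * ‖f‖)⁻¹ := by
      rw [show ‖a‖ * ‖ainv‖ * ‖f‖ = (‖ainv‖ * ‖f‖) * ‖a‖ by ring, mul_inv,
        mul_assoc, inv_mul_cancel₀ hapos.ne', mul_one]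
    linarith
  have hboundA : ‖g a - f a‖ < ‖(↑A⁻¹ : E →L[ℝ] E)‖⁻¹ := by
    have h1 : ‖g a - f a‖ ≤ ‖g - f‖ * ‖a‖ := by
      have := ContinuousLinearMap.le_opNorm (g - f) a
      simpa using this
    have h4 : (‖ainv‖ * ‖f‖)⁻¹ ≤ ‖(↑A⁻¹ : E →L[ℝ] E)‖⁻¹ := by
      apply inv_anti₀ (Units.norm_pos A⁻¹)
      calc ‖(↑A⁻¹ : E →L[ℝ] E)‖ = ‖f ainv‖ := rfl
        _ ≤ ‖f‖ * ‖ainv‖ := ContinuousLinearMap.le_opNorm f ainv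
        _ = ‖ainv‖ * ‖f‖ := mul_comm _ _
    linarith
  have hboundB : ‖g.flip a - f.flip a‖ < ‖(↑B⁻¹ : E →L[ℝ] E)‖⁻¹ := by
    have h1 : ‖g.flip a - f.flip a‖ ≤ ‖g - f‖ * ‖a‖ := by
      have heq : g.flip a - f.flip a = (g - f).flip a := by
        ext x
        simp [ContinuousLinearMap.flip_apply]
      rw [heq]
      have := ContinuousLinearMap.le_opNorm (g - f).flip a
      rwa [ContinuousLinearMap.opNorm_flip] at this
    have h4 : (‖ainv‖ * ‖f‖)⁻¹ ≤ ‖(↑B⁻¹ : E →L[ℝ] E)‖⁻¹ := by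
      apply inv_anti₀ (Units.norm_pos B⁻¹)
      calc ‖(↑B⁻¹ : E →L[ℝ] E)‖ = ‖f.flip ainv‖ := rfl
        _ ≤ ‖f.flip‖ * ‖ainv‖ := ContinuousLinearMap.le_opNorm f.flip ainv
        _ = ‖ainv‖ * ‖f‖ := by rw [ContinuousLinearMap.opNorm_flip]; exact mul_comm _ _
    linarith
  set U : (E →L[ℝ] E)ˣ := A.ofNearby (g a) hboundA with hUdef
  set V : (E →L[ℝ] E)ˣ := B.ofNearby (g.flip a) hboundB with hVdef
  have hUval : (↑U : E →L[ℝ] E) = g a := rfl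
  have hVval : (↑V : E →L[ℝ] E) = g.flip a := rfl
  -- injectivity / surjectivity of left and right multiplication by a
  have hLinj : ∀ x y : E, g a x = g a y → x = y := by
    intro x y h
    have h' : (↑U⁻¹ : E →L[ℝ] E) ((↑U : E →L[ℝ] E) x) = (↑U⁻¹ : E →L[ℝ] E) ((↑U : E →L[ℝ] E) y) := by
      rw [hUval, h]
    rwa [← ContinuousLinearMap.mul_apply, ← ContinuousLinearMap.mul_apply, U.inv_mul,
      ContinuousLinearMap.one_apply, ContinuousLinearMap.one_apply] at h'
  have hLsurj : ∀ z : E, ∃ x : E, g a x = z := by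
    intro z
    refine ⟨(↑U⁻¹ : E →L[ℝ] E) z, ?_⟩
    have : (↑U : E →L[ℝ] E) ((↑U⁻¹ : E →L[ℝ] E) z) = z := by
      rw [← ContinuousLinearMap.mul_apply, U.mul_inv, ContinuousLinearMap.one_apply]
    rwa [hUval] at this
  have hRinj : ∀ x y : E, g x a = g y a → x = y := by
    intro x y h
    have h' : (↑V⁻¹ : E →L[ℝ] E) ((↑V : E →L[ℝ] E) x) = (↑V⁻¹ : E →L[ℝ] E) ((↑V : E →L[ℝ] E) y) := by
      rw [hVval]
      simp only [ContinuousLinearMap.flip_apply]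
      rw [h]
    rwa [← ContinuousLinearMap.mul_apply, ← ContinuousLinearMap.mul_apply, V.inv_mul,
      ContinuousLinearMap.one_apply, ContinuousLinearMap.one_apply] at h'
  have hRsurj : ∀ z : E, ∃ x : E, g x a = z := by
    intro z
    refine ⟨(↑V⁻¹ : E →L[ℝ] E) z, ?_⟩
    have : (↑V : E →L[ℝ] E) ((↑V⁻¹ : E →L[ℝ] E) z) = z := by
      rw [← ContinuousLinearMap.mul_apply, V.mul_inv, ContinuousLinearMap.one_apply]
    rw [hVval] at this
    simpa [ContinuousLinearMap.flip_apply] using this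
  -- construct the unit
  obtain ⟨u, hu⟩ := hLsurj a
  have hleft : ∀ y : E, g u y = y := by
    intro y
    apply hLinj
    rw [← hg, hu]
  obtain ⟨v, hv⟩ := hRsurj a
  have hright : ∀ y : E, g y v = y := by
    intro y
    apply hRinj
    rw [hg, hv]
  have huv : u = v := by
    have h1 := hright u
    have h2 := hleft v
    rw [← h1, h2]
  -- invertibility of a
  obtain ⟨b, hb⟩ := hLsurj u
  obtain ⟨c, hc⟩ := hRsurj u
  have hbc : b = c := by
    calc b = g u b := (hleft b).symm
      _ = g (g c a) b := by rw [hc]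
      _ = g c (g a b) := hg c a b
      _ = g c u := by rw [hb]
      _ = g c v := by rw [huv]
      _ = c := hright c
  refine ⟨u, fun x => ⟨hleft x, by rw [huv]; exact hright x⟩, b, hb, ?_⟩
  rw [hbc, hc]
end

section
/- Let E be a nonzero Banach space. For every M > 0 there exists a constant C_M > 0 (depending only on M) such that: for every unital continuous multiplication * on E, every a invertible in (E,*), every continuous multiplication ⋄ on E, and every constant r with 0 ≤ r < 1, if |*| ≤ M, ‖e_*‖ ≤ M, ‖a‖ ≤ M, ‖a⁻¹_*‖ ≤ M and |⋄ − *| ≤ r·M⁻³, then ⋄ is unital, a is invertible in (E,⋄), and ‖a⁻¹_⋄ − a⁻¹_*‖ ≤ s²·C_M·|⋄ − *|, where s = 1 + r·(1−r)⁻¹. -/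
/-!
Left and right multiplications by `x` under `g` differ from those under `f` by at most
`‖g - f‖ ‖x‖` in operator norm. For `x = e, a` the latter are invertible in the Banach algebra
`E →L[ℝ] E` with inverses of norm `≤ M²`, so by the Neumann series the former are invertible with
inverses of norm `≤ (1 - r)⁻¹ M²`. For an associative multiplication, an invertible left and an
invertible right multiplication operator yield a two-sided unit `e'`, and invertible left and
right multiplications by `a` yield its inverse `b`. Comparing `g e e' = e` with `f e e = e`
bounds `‖e' - e‖`, and then comparing `g a b = e'` with `f a a⁻¹ = e` bounds `‖b - a⁻¹‖`;
finally `1 + r (1 - r)⁻¹ = (1 - r)⁻¹`.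
-/

open ContinuousLinearMap

section BanachAlgebra

variable {A : Type*} [NormedRing A] [HasSummableGeomSeries A] [NormOneClass A]

theorem IsUnit.isUnit_and_norm_inverse_le_of_norm_sub_le {x y : A} (hx : IsUnit x) {r : ℝ}
    (hr : r < 1) (h : ‖Ring.inverse x‖ * ‖y - x‖ ≤ r) :
    IsUnit y ∧ ‖Ring.inverse y‖ ≤ (1 - r)⁻¹ * ‖Ring.inverse x‖ := by
  obtain ⟨u, rfl⟩ := hx
  rw [Ring.inverse_unit] at h ⊢
  set t := (↑u⁻¹ : A) * (u - y)
  have ht : ‖t‖ ≤ r := (norm_mul_le _ _).trans (by rwa [norm_sub_rev])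
  have ht1 : ‖t‖ < 1 := ht.trans_lt hr
  have hy : y = ↑(u * Units.oneSub t ht1) := by simp [t, mul_sub, ← mul_assoc]
  rw [hy]
  refine ⟨Units.isUnit _, ?_⟩
  rw [Ring.inverse_unit, mul_inv_rev, Units.val_mul]
  have hinv : ‖(↑(Units.oneSub t ht1)⁻¹ : A)‖ ≤ (1 - r)⁻¹ :=
    calc ‖(↑(Units.oneSub t ht1)⁻¹ : A)‖ ≤ ‖(1 : A)‖ - 1 + (1 - ‖t‖)⁻¹ :=
          tsum_geometric_le_of_norm_lt_one t ht1
      _ ≤ (1 - r)⁻¹ := by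
          rw [norm_one, sub_self, zero_add]
          gcongr
  exact (norm_mul_le _ _).trans (by gcongr)

end BanachAlgebra

section Multiplication

variable {𝕜 E : Type*} [NontriviallyNormedField 𝕜] [NormedAddCommGroup E] [NormedSpace 𝕜 E]
  {f g : E →L[𝕜] E →L[𝕜] E}

theorem apply_inverse_apply {T : E →L[𝕜] E} (hT : IsUnit T) (y : E) :
    T (Ring.inverse T y) = y := by
  rw [← mul_apply_eq_comp, Ring.mul_inverse_cancel T hT, one_apply_eq_self]

theorem norm_sub_le_norm_inverse_mul {T : E →L[𝕜] E} (hT : IsUnit T) (y y₀ : E) :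
    ‖y - y₀‖ ≤ ‖Ring.inverse T‖ * ‖T y - T y₀‖ :=
  calc ‖y - y₀‖ = ‖Ring.inverse T (T y - T y₀)‖ := by
        rw [← map_sub, ← mul_apply_eq_comp, Ring.inverse_mul_cancel T hT, one_apply_eq_self]
    _ ≤ ‖Ring.inverse T‖ * ‖T y - T y₀‖ := le_opNorm _ _

theorem norm_sub_le_of_apply_eq_of_apply_eq {a y y₀ z z₀ : E} (hga : IsUnit (g a))
    (hy : g a y = z) (hy₀ : f a y₀ = z₀) :
    ‖y - y₀‖ ≤ ‖Ring.inverse (g a)‖ * (‖z - z₀‖ + ‖g - f‖ * ‖a‖ * ‖y₀‖) := by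
  have hsplit : g a y - g a y₀ = (z - z₀) + (f - g) a y₀ := by
    rw [sub_apply, sub_apply, hy, hy₀]; abel
  calc ‖y - y₀‖ ≤ ‖Ring.inverse (g a)‖ * ‖g a y - g a y₀‖ :=
        norm_sub_le_norm_inverse_mul hga y y₀
    _ ≤ ‖Ring.inverse (g a)‖ * (‖z - z₀‖ + ‖g - f‖ * ‖a‖ * ‖y₀‖) := by
        rw [hsplit, norm_sub_rev g f]
        gcongr
        exact (norm_add_le _ _).trans (by gcongr; exact le_opNorm₂ _ _ _)

theorem apply_apply_eq_mul (hg : ∀ x y z, g (g x y) z = g x (g y z)) (x y : E) :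
    g (g x y) = g x * g y := by
  ext z; exact hg x y z

theorem flip_assoc (hg : ∀ x y z, g (g x y) z = g x (g y z)) (x y z : E) :
    g.flip (g.flip x y) z = g.flip x (g.flip y z) :=
  (hg z y x).symm

theorem exists_apply_eq_one (hg : ∀ x y z, g (g x y) z = g x (g y z)) {x : E}
    (hx : IsUnit (g x)) : ∃ e, g e = 1 := by
  refine ⟨Ring.inverse (g x) x, hx.mul_left_cancel ?_⟩
  rw [← apply_apply_eq_mul hg, apply_inverse_apply hx, mul_one]

theorem exists_mul_unit (hg : ∀ x y z, g (g x y) z = g x (g y z)) {x y : E}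
    (hx : IsUnit (g x)) (hy : IsUnit (g.flip y)) : ∃ e, ∀ z, g e z = z ∧ g z e = z := by
  obtain ⟨el, hel⟩ := exists_apply_eq_one hg hx
  obtain ⟨er, her⟩ := exists_apply_eq_one (flip_assoc hg) hy
  have hl : ∀ z, g el z = z := fun z => by rw [hel, one_apply_eq_self]
  have hr : ∀ z, g z er = z := fun z => by rw [← flip_apply, her, one_apply_eq_self]
  refine ⟨el, fun z => ⟨hl z, ?_⟩⟩
  rw [show el = er from (hr el).symm.trans (hl er), hr]

theorem exists_mul_inverse (hg : ∀ x y z, g (g x y) z = g x (g y z)) {e a : E}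
    (he : ∀ z, g e z = z ∧ g z e = z) (ha : IsUnit (g a)) (ha' : IsUnit (g.flip a)) :
    ∃ b, g a b = e ∧ g b a = e := by
  set b := Ring.inverse (g a) e
  set c := Ring.inverse (g.flip a) e
  have hab : g a b = e := apply_inverse_apply ha e
  have hca : g c a = e := apply_inverse_apply ha' e
  refine ⟨b, hab, ?_⟩
  rwa [show b = c by rw [← (he c).2, ← hab, ← hg, hca, (he b).1]]

theorem isUnit_apply_and_inverse_eq (hf : ∀ x y z, f (f x y) z = f x (f y z)) {e x x' : E}
    (he : ∀ z, f e z = z ∧ f z e = z) (hxx' : f x x' = e) (hx'x : f x' x = e) :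
    IsUnit (f x) ∧ Ring.inverse (f x) = f x' := by
  have hfe : f e = 1 := by ext z; exact (he z).1
  let u : (E →L[𝕜] E)ˣ := ⟨f x, f x', by rw [← apply_apply_eq_mul hf, hxx', hfe],
    by rw [← apply_apply_eq_mul hf, hx'x, hfe]⟩
  exact ⟨u.isUnit, Ring.inverse_unit u⟩

end Multiplication

section BanachMultiplication

variable {𝕜 E : Type*} [NontriviallyNormedField 𝕜] [NormedAddCommGroup E] [NormedSpace 𝕜 E]
  [CompleteSpace E] [Nontrivial E] {f g : E →L[𝕜] E →L[𝕜] E}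

theorem isUnit_apply_and_norm_inverse_le_of_norm_sub_le
    (hf : ∀ x y z, f (f x y) z = f x (f y z)) {e x x' : E} (he : ∀ z, f e z = z ∧ f z e = z)
    (hxx' : f x x' = e) (hx'x : f x' x = e) {M r : ℝ}
    (hM : 0 < M) (hr : r < 1) (hfM : ‖f‖ ≤ M) (hx : ‖x‖ ≤ M) (hx' : ‖x'‖ ≤ M)
    (hgf : ‖g - f‖ ≤ r * (M ^ 3)⁻¹) :
    IsUnit (g x) ∧ ‖Ring.inverse (g x)‖ ≤ (1 - r)⁻¹ * M ^ 2 := by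
  obtain ⟨hfx, hinv⟩ := isUnit_apply_and_inverse_eq hf he hxx' hx'x
  have hinvM : ‖Ring.inverse (f x)‖ ≤ M ^ 2 := by
    rw [hinv, sq]; exact f.le_of_opNorm_le_of_le hfM hx'
  have hclose : ‖Ring.inverse (f x)‖ * ‖g x - f x‖ ≤ r :=
    calc ‖Ring.inverse (f x)‖ * ‖(g - f) x‖ ≤ M ^ 2 * (r * (M ^ 3)⁻¹ * M) := by
          gcongr; exact (g - f).le_of_opNorm_le_of_le hgf hx
      _ = r := by field_simp
  obtain ⟨hgx, hgx_inv⟩ := hfx.isUnit_and_norm_inverse_le_of_norm_sub_le hr hclose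
  exact ⟨hgx, hgx_inv.trans (by gcongr)⟩

theorem isUnit_flip_apply_of_norm_sub_le (hf : ∀ x y z, f (f x y) z = f x (f y z)) {e x x' : E}
    (he : ∀ z, f e z = z ∧ f z e = z) (hxx' : f x x' = e) (hx'x : f x' x = e) {M r : ℝ}
    (hM : 0 < M) (hr : r < 1) (hfM : ‖f‖ ≤ M) (hx : ‖x‖ ≤ M) (hx' : ‖x'‖ ≤ M)
    (hgf : ‖g - f‖ ≤ r * (M ^ 3)⁻¹) :
    IsUnit (g.flip x) := by
  have hflip : g.flip - f.flip = (g - f).flip := by ext; rfl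
  refine (isUnit_apply_and_norm_inverse_le_of_norm_sub_le (flip_assoc hf)
    (fun z => (he z).symm) hx'x hxx' hM hr (by rwa [opNorm_flip]) hx hx' ?_).1
  rwa [hflip, opNorm_flip]

end BanachMultiplication

/-- Let `E` be a nonzero Banach space.  For every `M > 0` there is a constant
`C > 0` (depending only on `M`) such that for every unital continuous multiplication `f` on
`E`, every `a` invertible in `(E, f)` with inverse `ainv`, every continuous multiplication
`g` on `E` and every `0 ≤ r < 1`, if `‖f‖, ‖e_f‖, ‖a‖, ‖ainv‖ ≤ M` and `‖g - f‖ ≤ r * M⁻³`,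
then `g` is unital, `a` is invertible in `(E, g)`, and
`‖a⁻¹_g - a⁻¹_f‖ ≤ s^2 * C * ‖g - f‖` where `s = 1 + r * (1 - r)⁻¹`. -/
theorem stmt_6
    {E : Type*} [NormedAddCommGroup E] [NormedSpace ℝ E] [CompleteSpace E] [Nontrivial E] :
    ∀ M : ℝ, 0 < M → ∃ C : ℝ, 0 < C ∧
      ∀ (f g : E →L[ℝ] E →L[ℝ] E),
        (∀ x y z : E, f (f x y) z = f x (f y z)) →
        (∀ x y z : E, g (g x y) z = g x (g y z)) →
        ∀ e : E, (∀ x : E, f e x = x ∧ f x e = x) →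
        ∀ a ainv : E, f a ainv = e → f ainv a = e →
        ∀ r : ℝ, 0 ≤ r → r < 1 →
        ‖f‖ ≤ M → ‖e‖ ≤ M → ‖a‖ ≤ M → ‖ainv‖ ≤ M → ‖g - f‖ ≤ r * (M ^ 3)⁻¹ →
        ∃ e' : E, (∀ x : E, g e' x = x ∧ g x e' = x) ∧
          ∃ b : E, g a b = e' ∧ g b a = e' ∧
            ‖b - ainv‖ ≤ (1 + r * (1 - r)⁻¹) ^ 2 * C * ‖g - f‖ := by
  intro M hM
  refine ⟨M ^ 6 + M ^ 4, by positivity, ?_⟩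
  intro f g hf hg e he a ainv hainv hinva r hr0 hr1 hfM heM haM hainvM hgf
  obtain ⟨hge, hge_inv⟩ :=
    isUnit_apply_and_norm_inverse_le_of_norm_sub_le hf he (he e).1 (he e).1 hM hr1 hfM heM heM hgf
  obtain ⟨hga, hga_inv⟩ :=
    isUnit_apply_and_norm_inverse_le_of_norm_sub_le hf he hainv hinva hM hr1 hfM haM hainvM hgf
  obtain ⟨e', he'⟩ := exists_mul_unit hg hge
    (isUnit_flip_apply_of_norm_sub_le hf he (he e).1 (he e).1 hM hr1 hfM heM heM hgf)
  obtain ⟨b, hab, hba⟩ := exists_mul_inverse hg he' hga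
    (isUnit_flip_apply_of_norm_sub_le hf he hainv hinva hM hr1 hfM haM hainvM hgf)
  refine ⟨e', he', b, hab, hba, ?_⟩
  have he'e := norm_sub_le_of_apply_eq_of_apply_eq hge (he' e).2 (he e).1
  have hbainv := norm_sub_le_of_apply_eq_of_apply_eq hga hab hainv
  have hs : 1 + r * (1 - r)⁻¹ = (1 - r)⁻¹ := by
    have : 1 - r ≠ 0 := by linarith
    field_simp; ring
  have hs1 : 1 ≤ (1 - r)⁻¹ := one_le_inv_iff₀.mpr ⟨by linarith, by linarith⟩
  rw [sub_self, norm_zero, zero_add] at he'e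
  rw [hs]
  set s := (1 - r)⁻¹
  set δ := ‖g - f‖
  calc ‖b - ainv‖ ≤ s * M ^ 2 * (s * M ^ 2 * (δ * M * M) + δ * M * M) :=
        hbainv.trans (by gcongr; exact he'e.trans (by gcongr))
    _ = s ^ 2 * M ^ 6 * δ + s * M ^ 4 * δ := by ring
    _ ≤ s ^ 2 * (M ^ 6 + M ^ 4) * δ := by
        have : s * M ^ 4 * δ ≤ s ^ 2 * M ^ 4 * δ := by
          gcongr; exact le_self_pow₀ hs1 two_ne_zero
        linarith
end

section
/- Let E be a nonzero complex Banach space, let (⋆_n) be a sequence of unital continuous multiplications on E converging in the operator norm on bounded bilinear operators to a unital continuous multiplication ⋆. Then for every a ∈ E, the resolvent set satisfies ρ_⋆(a) ⊆ ⋃_n ⋂_{k ≥ n} ρ_{⋆_k}(a); equivalently the spectrum satisfies σ_⋆(a) ⊇ ⋂_n ⋃_{k ≥ n} σ_{⋆_k}(a). -/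
open Filter

/-- The resolvent set of `a` in the complete normed algebra `(E, f)` with unit `e`:
the set of `z : ℂ` such that `z • e - a` is invertible in `(E, f)`. -/
def bilinResolvent {E : Type*} [NormedAddCommGroup E] [NormedSpace ℂ E]
    (f : E →L[ℂ] E →L[ℂ] E) (e : E) (a : E) : Set ℂ :=
  {z : ℂ | ∃ b : E, f (z • e - a) b = e ∧ f b (z • e - a) = e}

/-- Let `E` be a nonzero complex Banach space, `(F n)` a sequence of unital
continuous multiplications on `E` (with units `eF n`) converging in operator norm to a unital
continuous multiplication `f` (with unit `e`).  Then for every `a ∈ E`,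
`ρ_f(a) ⊆ ⋃ n, ⋂ k ≥ n, ρ_{F k}(a)`; equivalently
`⋂ n, ⋃ k ≥ n, σ_{F k}(a) ⊆ σ_f(a)`. -/
theorem stmt_7
    {E : Type*} [NormedAddCommGroup E] [NormedSpace ℂ E] [CompleteSpace E] [Nontrivial E]
    (F : ℕ → E →L[ℂ] E →L[ℂ] E) (f : E →L[ℂ] E →L[ℂ] E)
    (hF : ∀ n, ∀ x y z : E, F n (F n x y) z = F n x (F n y z))
    (hf : ∀ x y z : E, f (f x y) z = f x (f y z))
    (eF : ℕ → E) (heF : ∀ n, ∀ x : E, F n (eF n) x = x ∧ F n x (eF n) = x)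
    (e : E) (he : ∀ x : E, f e x = x ∧ f x e = x)
    (hconv : Tendsto F atTop (nhds f))
    (a : E) :
    (bilinResolvent f e a ⊆ ⋃ n, ⋂ k, ⋂ (_ : n ≤ k), bilinResolvent (F k) (eF k) a) ∧
    ((⋂ n, ⋃ k, ⋃ (_ : n ≤ k), (bilinResolvent (F k) (eF k) a)ᶜ) ⊆
      (bilinResolvent f e a)ᶜ) := by
  have main : bilinResolvent f e a ⊆
      ⋃ n, ⋂ k, ⋂ (_ : n ≤ k), bilinResolvent (F k) (eF k) a := by
    intro z hz
    obtain ⟨b, hb1, hb2⟩ := hz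
    -- The left multiplication operator by `z•e - a` equals `z•1 - f a`.
    have keyf : f (z • e - a) = z • (1 : E →L[ℂ] E) - f a := by
      ext w
      simp only [map_sub, map_smul, ContinuousLinearMap.sub_apply,
        ContinuousLinearMap.smul_apply, ContinuousLinearMap.one_apply, (he w).1]
    -- `z•1 - f a` is a unit of `B(E)` with inverse `f b`.
    have hLunit : IsUnit (z • (1 : E →L[ℂ] E) - f a) := by
      refine ⟨⟨z • (1 : E →L[ℂ] E) - f a, f b, ?_, ?_⟩, rfl⟩
      · ext w
        simp only [ContinuousLinearMap.mul_apply, ContinuousLinearMap.one_apply, ← keyf]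
        rw [← hf, hb1, (he w).1]
      · ext w
        simp only [ContinuousLinearMap.mul_apply, ContinuousLinearMap.one_apply, ← keyf]
        rw [← hf, hb2, (he w).1]
    -- `z•1 - F k a → z•1 - f a`, hence eventually a unit.
    have htend : Tendsto (fun k => z • (1 : E →L[ℂ] E) - F k a) atTop
        (nhds (z • (1 : E →L[ℂ] E) - f a)) := by
      have h1 : Tendsto (fun k => F k a) atTop (nhds (f a)) :=
        ((ContinuousLinearMap.apply ℂ (E →L[ℂ] E) a).continuous.tendsto f).comp hconv
      exact tendsto_const_nhds.sub h1
    have hev : ∀ᶠ k in atTop, IsUnit (z • (1 : E →L[ℂ] E) - F k a) :=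
      htend.eventually (Units.isOpen.mem_nhds hLunit)
    obtain ⟨N, hN⟩ := eventually_atTop.mp hev
    simp only [Set.mem_iUnion, Set.mem_iInter]
    refine ⟨N, fun k hk => ?_⟩
    obtain ⟨U, hU⟩ := hN k hk
    -- The left multiplication operator by `z • eF k - a` in `(E, F k)` equals `↑U`.
    have keyk : F k (z • eF k - a) = (U : E →L[ℂ] E) := by
      rw [hU]
      ext w
      simp only [map_sub, map_smul, ContinuousLinearMap.sub_apply,
        ContinuousLinearMap.smul_apply, ContinuousLinearMap.one_apply, (heF k w).1]
    have hUUinv : ∀ w : E, (U : E →L[ℂ] E) ((↑U⁻¹ : E →L[ℂ] E) w) = w := by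
      intro w
      have := congrArg (fun (T : E →L[ℂ] E) => T w) U.mul_inv
      simpa only [ContinuousLinearMap.mul_apply, ContinuousLinearMap.one_apply] using this
    have hUinvU : ∀ w : E, (↑U⁻¹ : E →L[ℂ] E) ((U : E →L[ℂ] E) w) = w := by
      intro w
      have := congrArg (fun (T : E →L[ℂ] E) => T w) U.inv_mul
      simpa only [ContinuousLinearMap.mul_apply, ContinuousLinearMap.one_apply] using this
    refine ⟨(↑U⁻¹ : E →L[ℂ] E) (eF k), ?_, ?_⟩
    · rw [keyk]; exact hUUinv _
    · set c := F k ((↑U⁻¹ : E →L[ℂ] E) (eF k)) (z • eF k - a) with hc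
      have h2 : F k (z • eF k - a) ((↑U⁻¹ : E →L[ℂ] E) (eF k)) = eF k := by
        rw [keyk]; exact hUUinv _
      have hUc : (U : E →L[ℂ] E) c = z • eF k - a := by
        have h1 : F k (z • eF k - a) c = F k (F k (z • eF k - a)
            ((↑U⁻¹ : E →L[ℂ] E) (eF k))) (z • eF k - a) := (hF k _ _ _).symm
        rw [h2, (heF k _).1] at h1
        rw [← keyk]
        exact h1
      have hUe : (U : E →L[ℂ] E) (eF k) = z • eF k - a := by
        rw [← keyk]
        exact (heF k (z • eF k - a)).2
      have : c = eF k := by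
        have h3 : (↑U⁻¹ : E →L[ℂ] E) ((U : E →L[ℂ] E) c)
            = (↑U⁻¹ : E →L[ℂ] E) ((U : E →L[ℂ] E) (eF k)) := by rw [hUc, hUe]
        rwa [hUinvU, hUinvU] at h3
      exact this
  refine ⟨main, fun z hz hzres => ?_⟩
  have := main hzres
  simp only [Set.mem_iUnion, Set.mem_iInter] at this
  simp only [Set.mem_iInter, Set.mem_iUnion, Set.mem_compl_iff] at hz
  obtain ⟨n, hn⟩ := this
  obtain ⟨k, hk, hk'⟩ := hz n
  exact hk' (hn k hk)
end

section
/- Let E be a nonzero Banach space. The set Mltp_u(E) of unital continuous multiplications on E is an open subset of Mltp(E), the set of all continuous multiplications on E, in the topology induced by the operator norm on bounded bilinear operators. -/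
/-!
If `e` is the unit of `⋆`, then left and right multiplication by `e` are the identity, and
invertibility is an open condition on operators of a Banach space. For a nearby associative `⋆'`,
left and right multiplication by `e` are therefore still bijective, and in a semigroup this already
forces a two-sided unit: if `e ⋆' u = e` then `e ⋆' (u ⋆' x) = e ⋆' x`, so `u` is a left unit by
injectivity, and symmetrically there is a right unit, which must coincide with it.
-/

section Semigroup

variable {α : Type*} {m : α → α → α}

theorem exists_left_unit_of_bijective_mul_left (hm : ∀ x y z, m (m x y) z = m x (m y z))
    {e : α} (he : Function.Bijective (m e)) : ∃ u, ∀ x, m u x = x := by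
  obtain ⟨u, hu⟩ := he.2 e
  exact ⟨u, fun x => he.1 (by rw [← hm, hu])⟩

theorem exists_right_unit_of_bijective_mul_right (hm : ∀ x y z, m (m x y) z = m x (m y z))
    {e : α} (he : Function.Bijective fun x => m x e) : ∃ v, ∀ x, m x v = x :=
  exists_left_unit_of_bijective_mul_left (m := fun x y => m y x)
    (fun x y z => (hm z y x).symm) he

theorem exists_unit_of_bijective_mul_left_of_bijective_mul_right
    (hm : ∀ x y z, m (m x y) z = m x (m y z)) {e : α} (hl : Function.Bijective (m e))
    (hr : Function.Bijective fun x => m x e) : ∃ u, ∀ x, m u x = x ∧ m x u = x := by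
  obtain ⟨u, hu⟩ := exists_left_unit_of_bijective_mul_left hm hl
  obtain ⟨v, hv⟩ := exists_right_unit_of_bijective_mul_right hm hr
  have huv : u = v := (hv u).symm.trans (hu v)
  exact ⟨u, fun x => ⟨hu x, huv ▸ hv x⟩⟩

end Semigroup

namespace ContinuousLinearMap

variable {𝕜 E : Type*} [NontriviallyNormedField 𝕜] [NormedAddCommGroup E] [NormedSpace 𝕜 E]

theorem isUnit_apply_and_isUnit_flip_apply_of_unit {g : E →L[𝕜] E →L[𝕜] E} {e : E}
    (he : ∀ x, g e x = x ∧ g x e = x) : IsUnit (g e) ∧ IsUnit (g.flip e) := by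
  have hl : g e = 1 := ext fun x => (he x).1
  have hr : g.flip e = 1 := ext fun x => (he x).2
  exact ⟨hl ▸ isUnit_one, hr ▸ isUnit_one⟩

variable [CompleteSpace E]

theorem isOpen_setOf_isUnit_apply_and_isUnit_flip_apply (e : E) :
    IsOpen {g : E →L[𝕜] E →L[𝕜] E | IsUnit (g e) ∧ IsUnit (g.flip e)} := by
  have hl : Continuous fun g : E →L[𝕜] E →L[𝕜] E => g e :=
    continuous_id.clm_apply continuous_const
  have hr : Continuous fun g : E →L[𝕜] E →L[𝕜] E => g.flip e :=
    (flipₗᵢ 𝕜 E E E).continuous.clm_apply continuous_const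
  exact (Units.isOpen.preimage hl).inter (Units.isOpen.preimage hr)

theorem exists_unit_of_isUnit_apply_of_isUnit_flip_apply {g : E →L[𝕜] E →L[𝕜] E}
    (hg : ∀ x y z, g (g x y) z = g x (g y z)) {e : E} (hl : IsUnit (g e))
    (hr : IsUnit (g.flip e)) : ∃ u, ∀ x, g u x = x ∧ g x u = x :=
  exists_unit_of_bijective_mul_left_of_bijective_mul_right (m := fun x y => g x y) hg
    (isUnit_iff_bijective.mp hl) (isUnit_iff_bijective.mp hr)

end ContinuousLinearMap

theorem stmt_10_general
    {E : Type*} [NormedAddCommGroup E] [NormedSpace ℝ E] [CompleteSpace E] :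
    IsOpen {f : {g : E →L[ℝ] E →L[ℝ] E // ∀ x y z : E, g (g x y) z = g x (g y z)} |
      ∃ e : E, ∀ x : E, f.1 e x = x ∧ f.1 x e = x} := by
  refine isOpen_iff_forall_mem_open.mpr fun f ⟨e, he⟩ =>
    ⟨Subtype.val ⁻¹' {g | IsUnit (g e) ∧ IsUnit (g.flip e)}, ?_, ?_, ?_⟩
  · rintro g ⟨hl, hr⟩
    exact ContinuousLinearMap.exists_unit_of_isUnit_apply_of_isUnit_flip_apply g.2 hl hr
  · exact (ContinuousLinearMap.isOpen_setOf_isUnit_apply_and_isUnit_flip_apply e).preimage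
      continuous_subtype_val
  · exact ContinuousLinearMap.isUnit_apply_and_isUnit_flip_apply_of_unit he

/-- Let `E` be a nonzero Banach space.  The set of unital continuous
multiplications on `E` is open in the set `Mltp E` of all continuous multiplications on `E`
(with the topology induced by the operator norm on bounded bilinear operators). -/
theorem stmt_10
    {E : Type*} [NormedAddCommGroup E] [NormedSpace ℝ E] [CompleteSpace E] [Nontrivial E] :
    IsOpen {f : {g : E →L[ℝ] E →L[ℝ] E // ∀ x y z : E, g (g x y) z = g x (g y z)} |
      ∃ e : E, ∀ x : E, f.1 e x = x ∧ f.1 x e = x} :=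
  stmt_10_general
end

section
/- Let E be a Banach space, let s, t : E → E be linear homeomorphisms, and let ⋄, * be continuous multiplications on E. Define the translated multiplications ⋄_s(a,b) := s⁻¹(s(a) ⋄ s(b)) and *_t(a,b) := t⁻¹(t(a) * t(b)). Then |⋄_s − *_t| ≤ |⋄|·|s|²·|s⁻¹ − t⁻¹| + |t⁻¹|·( |⋄|·(|s| + |t|)·|s − t| + |t|²·|⋄ − *| ), where |·| denotes operator norms of linear and bilinear operators. -/
/-- Let `E` be a Banach space, `s, t` linear homeomorphisms of `E`, and
`d, f` continuous multiplications on `E`.  Let `ds` and `ft` be the translated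
multiplications `ds a b = s⁻¹ (d (s a) (s b))` and `ft a b = t⁻¹ (f (t a) (t b))`.  Then
`‖ds - ft‖ ≤ ‖d‖ ‖s‖² ‖s⁻¹ - t⁻¹‖ + ‖t⁻¹‖ (‖d‖ (‖s‖ + ‖t‖) ‖s - t‖ + ‖t‖² ‖d - f‖)`. -/
theorem stmt_15
    {E : Type*} [NormedAddCommGroup E] [NormedSpace ℝ E] [CompleteSpace E]
    (s t : E ≃L[ℝ] E) (d f : E →L[ℝ] E →L[ℝ] E)
    (hd : ∀ x y z : E, d (d x y) z = d x (d y z))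
    (hf : ∀ x y z : E, f (f x y) z = f x (f y z))
    (ds ft : E →L[ℝ] E →L[ℝ] E)
    (hds : ∀ a b : E, ds a b = s.symm (d (s a) (s b)))
    (hft : ∀ a b : E, ft a b = t.symm (f (t a) (t b))) :
    ‖ds - ft‖ ≤
      ‖d‖ * ‖(s : E →L[ℝ] E)‖ ^ 2 * ‖(s.symm : E →L[ℝ] E) - (t.symm : E →L[ℝ] E)‖ +
      ‖(t.symm : E →L[ℝ] E)‖ *
        (‖d‖ * (‖(s : E →L[ℝ] E)‖ + ‖(t : E →L[ℝ] E)‖) * ‖(s : E →L[ℝ] E) - (t : E →L[ℝ] E)‖ +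
          ‖(t : E →L[ℝ] E)‖ ^ 2 * ‖d - f‖) := by
  set S := ‖(s : E →L[ℝ] E)‖ with hS
  set T := ‖(t : E →L[ℝ] E)‖ with hT
  set Ti := ‖(t.symm : E →L[ℝ] E)‖
  set Si := ‖(s.symm : E →L[ℝ] E) - (t.symm : E →L[ℝ] E)‖
  set ST := ‖(s : E →L[ℝ] E) - (t : E →L[ℝ] E)‖
  set D := ‖d‖
  set DF := ‖d - f‖
  have hC : (0:ℝ) ≤ D * S ^ 2 * Si + Ti * (D * (S + T) * ST + T ^ 2 * DF) := by
    positivity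
  apply ContinuousLinearMap.opNorm_le_bound _ hC
  intro a
  apply ContinuousLinearMap.opNorm_le_bound _ (by positivity)
  intro b
  have lhs_eq : (ds - ft) a b = s.symm (d (s a) (s b)) - t.symm (f (t a) (t b)) := by
    simp [ContinuousLinearMap.sub_apply, hds, hft]
  rw [lhs_eq]
  set X := d (s a) (s b) with hX
  set Y := f (t a) (t b) with hY
  have e1 : s.symm X - t.symm Y =
      ((s.symm : E →L[ℝ] E) - (t.symm : E →L[ℝ] E)) X + (t.symm : E →L[ℝ] E) (X - Y) := by
    simp [ContinuousLinearMap.sub_apply, map_sub]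
  have e2 : X - Y = d (s a - t a) (s b) + (d (t a)) (s b - t b) + ((d - f) (t a)) (t b) := by
    simp [hX, hY, map_sub, ContinuousLinearMap.sub_apply]
  have hsa : ‖s a - t a‖ ≤ ST * ‖a‖ := by
    have := ((s : E →L[ℝ] E) - (t : E →L[ℝ] E)).le_opNorm a
    simpa [ContinuousLinearMap.sub_apply] using this
  have hsb : ‖s b - t b‖ ≤ ST * ‖b‖ := by
    have := ((s : E →L[ℝ] E) - (t : E →L[ℝ] E)).le_opNorm b
    simpa [ContinuousLinearMap.sub_apply] using this
  have hsa' : ‖s a‖ ≤ S * ‖a‖ := (s : E →L[ℝ] E).le_opNorm a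
  have hsb' : ‖s b‖ ≤ S * ‖b‖ := (s : E →L[ℝ] E).le_opNorm b
  have hta : ‖t a‖ ≤ T * ‖a‖ := (t : E →L[ℝ] E).le_opNorm a
  have htb : ‖t b‖ ≤ T * ‖b‖ := (t : E →L[ℝ] E).le_opNorm b
  have bX : ‖X‖ ≤ D * (S * ‖a‖) * (S * ‖b‖) := by
    calc ‖X‖ ≤ D * ‖s a‖ * ‖s b‖ := d.le_opNorm₂ (s a) (s b)
    _ ≤ D * (S * ‖a‖) * (S * ‖b‖) := by
        gcongr <;> first | exact norm_nonneg _ | positivity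
  have b1 : ‖d (s a - t a) (s b)‖ ≤ D * (ST * ‖a‖) * (S * ‖b‖) := by
    calc ‖d (s a - t a) (s b)‖ ≤ D * ‖s a - t a‖ * ‖s b‖ := d.le_opNorm₂ _ _
    _ ≤ D * (ST * ‖a‖) * (S * ‖b‖) := by gcongr
  have b2 : ‖(d (t a)) (s b - t b)‖ ≤ D * (T * ‖a‖) * (ST * ‖b‖) := by
    calc ‖(d (t a)) (s b - t b)‖ ≤ D * ‖t a‖ * ‖s b - t b‖ := d.le_opNorm₂ _ _
    _ ≤ D * (T * ‖a‖) * (ST * ‖b‖) := by gcongr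
  have b3 : ‖((d - f) (t a)) (t b)‖ ≤ DF * (T * ‖a‖) * (T * ‖b‖) := by
    calc ‖((d - f) (t a)) (t b)‖ ≤ DF * ‖t a‖ * ‖t b‖ := (d - f).le_opNorm₂ _ _
    _ ≤ DF * (T * ‖a‖) * (T * ‖b‖) := by gcongr
  have bXY : ‖X - Y‖ ≤ D * (ST * ‖a‖) * (S * ‖b‖) + D * (T * ‖a‖) * (ST * ‖b‖)
      + DF * (T * ‖a‖) * (T * ‖b‖) := by
    rw [e2]
    calc ‖_ + _ + _‖ ≤ ‖d (s a - t a) (s b) + (d (t a)) (s b - t b)‖ + ‖((d - f) (t a)) (t b)‖ :=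
          norm_add_le _ _
    _ ≤ ‖d (s a - t a) (s b)‖ + ‖(d (t a)) (s b - t b)‖ + ‖((d - f) (t a)) (t b)‖ := by
          gcongr; exact norm_add_le _ _
    _ ≤ _ := by gcongr
  have main : ‖s.symm X - t.symm Y‖ ≤ Si * (D * (S * ‖a‖) * (S * ‖b‖)) +
      Ti * (D * (ST * ‖a‖) * (S * ‖b‖) + D * (T * ‖a‖) * (ST * ‖b‖)
        + DF * (T * ‖a‖) * (T * ‖b‖)) := by
    rw [e1]
    calc ‖_ + _‖ ≤ ‖((s.symm : E →L[ℝ] E) - (t.symm : E →L[ℝ] E)) X‖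
        + ‖(t.symm : E →L[ℝ] E) (X - Y)‖ := norm_add_le _ _
    _ ≤ Si * ‖X‖ + Ti * ‖X - Y‖ := by
        gcongr
        · exact ((s.symm : E →L[ℝ] E) - (t.symm : E →L[ℝ] E)).le_opNorm X
        · exact (t.symm : E →L[ℝ] E).le_opNorm (X - Y)
    _ ≤ _ := by gcongr
  calc ‖s.symm X - t.symm Y‖ ≤ _ := main
  _ = (D * S ^ 2 * Si + Ti * (D * (S + T) * ST + T ^ 2 * DF)) * ‖a‖ * ‖b‖ := by ring
end

section
/- Let E be a Banach space and let ⋆ be a continuous multiplication on E. Then the zero bilinear operator 0 lies in the closure (in the operator norm on bounded bilinear operators) of the orbit {⋆_t : t a linear homeomorphism of E onto E}, where a ⋆_t b := t⁻¹(t(a) ⋆ t(b)). Consequently, if ⋆ ≠ 0 then this orbit is not closed in Mltp(E). -/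
noncomputable def scaleCLE {E : Type*} [NormedAddCommGroup E] [NormedSpace ℝ E]
    (c : ℝ) (hc : c ≠ 0) : E ≃L[ℝ] E :=
  { LinearEquiv.smulOfNeZero ℝ E c hc with
    continuous_toFun := continuous_const_smul c
    continuous_invFun := continuous_const_smul c⁻¹ }

lemma scaleCLE_apply {E : Type*} [NormedAddCommGroup E] [NormedSpace ℝ E]
    (c : ℝ) (hc : c ≠ 0) (x : E) : scaleCLE c hc x = c • x := rfl

lemma scaleCLE_symm_apply {E : Type*} [NormedAddCommGroup E] [NormedSpace ℝ E]
    (c : ℝ) (hc : c ≠ 0) (x : E) : (scaleCLE c hc).symm x = c⁻¹ • x := rfl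

lemma smul_mem_orbit {E : Type*} [NormedAddCommGroup E] [NormedSpace ℝ E]
    (f : E →L[ℝ] E →L[ℝ] E) (c : ℝ) (hc : c ≠ 0) :
    ∀ a b : E, (c • f) a b = (scaleCLE c hc).symm (f (scaleCLE c hc a) (scaleCLE c hc b)) := by
  intro a b
  simp [scaleCLE_apply, scaleCLE_symm_apply, smul_smul, mul_comm,
    mul_assoc, inv_mul_cancel₀ hc]
  rw [mul_inv_cancel₀ hc, mul_one]

/-- Let `E` be a Banach space and `f` a continuous multiplication on `E`.
Then the zero bilinear operator lies in the operator-norm closure of the orbit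
`{f_t : t a linear homeomorphism of E}` where `f_t a b = t⁻¹ (f (t a) (t b))`.
Consequently, if `f ≠ 0`, this orbit is not closed in `Mltp(E)` (the set of continuous
multiplications with the operator-norm topology). -/
theorem stmt_17
    {E : Type*} [NormedAddCommGroup E] [NormedSpace ℝ E] [CompleteSpace E]
    (f : E →L[ℝ] E →L[ℝ] E)
    (hf : ∀ x y z : E, f (f x y) z = f x (f y z)) :
    (0 : E →L[ℝ] E →L[ℝ] E) ∈
      closure {g : E →L[ℝ] E →L[ℝ] E |
        ∃ t : E ≃L[ℝ] E, ∀ a b : E, g a b = t.symm (f (t a) (t b))} ∧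
    (f ≠ 0 →
      ¬ IsClosed {g : {h : E →L[ℝ] E →L[ℝ] E // ∀ x y z : E, h (h x y) z = h x (h y z)} |
          ∃ t : E ≃L[ℝ] E, ∀ a b : E, g.1 a b = t.symm (f (t a) (t b))}) := by
  -- the scaling sequence
  set c : ℕ → ℝ := fun n => ((n : ℝ) + 1)⁻¹ with hc
  have hcne : ∀ n : ℕ, c n ≠ 0 := by
    intro n
    positivity
  have htend : Filter.Tendsto (fun n : ℕ => c n • f) Filter.atTop (nhds 0) := by
    have h1 : Filter.Tendsto c Filter.atTop (nhds 0) :=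
      tendsto_one_div_add_atTop_nhds_zero_nat.congr (by simp [hc, one_div])
    rw [show (0 : E →L[ℝ] E →L[ℝ] E) = (0:ℝ) • f from (zero_smul ℝ f).symm]
    exact h1.smul_const f
  have hmem : ∀ n : ℕ, (c n • f) ∈ {g : E →L[ℝ] E →L[ℝ] E |
      ∃ t : E ≃L[ℝ] E, ∀ a b : E, g a b = t.symm (f (t a) (t b))} := fun n =>
    ⟨scaleCLE (c n) (hcne n), smul_mem_orbit f (c n) (hcne n)⟩
  have hassoc : ∀ n : ℕ, ∀ x y z : E,
      (c n • f) ((c n • f) x y) z = (c n • f) x ((c n • f) y z) := by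
    intro n x y z
    simp [map_smul, hf x y z]
  constructor
  · exact mem_closure_of_tendsto htend (Filter.Eventually.of_forall hmem)
  · intro hne hcl
    -- zero is associative
    have hz : ∀ x y z : E,
        (0 : E →L[ℝ] E →L[ℝ] E) ((0 : E →L[ℝ] E →L[ℝ] E) x y) z
          = (0 : E →L[ℝ] E →L[ℝ] E) x ((0 : E →L[ℝ] E →L[ℝ] E) y z) := by simp
    have htend' : Filter.Tendsto
        (fun n : ℕ => (⟨c n • f, hassoc n⟩ :
          {h : E →L[ℝ] E →L[ℝ] E // ∀ x y z : E, h (h x y) z = h x (h y z)}))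
        Filter.atTop (nhds ⟨0, hz⟩) := by
      rw [tendsto_subtype_rng]
      exact htend
    have h0 : (⟨0, hz⟩ : {h : E →L[ℝ] E →L[ℝ] E // ∀ x y z : E, h (h x y) z = h x (h y z)}) ∈
        {g : {h : E →L[ℝ] E →L[ℝ] E // ∀ x y z : E, h (h x y) z = h x (h y z)} |
          ∃ t : E ≃L[ℝ] E, ∀ a b : E, g.1 a b = t.symm (f (t a) (t b))} :=
      hcl.mem_of_tendsto htend' (Filter.Eventually.of_forall fun n =>
        ⟨scaleCLE (c n) (hcne n), smul_mem_orbit f (c n) (hcne n)⟩)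
    obtain ⟨t, ht⟩ := h0
    apply hne
    ext x y
    have := ht (t.symm x) (t.symm y)
    simp at this
    have h2 : f x y = t (t.symm (f x y)) := (t.apply_symm_apply _).symm
    rw [h2, ← this]
    simp
end
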